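/- For every t : ℕ → ℕ → ℕ → ℕ there exists a sequence (x_i) in ℓ² with ‖x_i‖ ≤ 1, computable primitively from t, such that from any weak cluster point x of (x_i) one can define the characteristic function of the Π⁰₂ set {n : ∀ a ∃ b, t(a,b,n) = 0}: namely, ∀x ∃y t(x,y,n)=0 holds iff ‖P_{M_n}(x)‖ = 0, where P_{M_n} is the projection onto the closed span of {e_{⟨n,k⟩} : k ∈ ℕ}, and otherwise ‖P_{M_n}(x)‖ = 2^{-(n+1)/2}. -/

import Mathlib

open Filter Topology
open scoped RealInnerProductSpace Classical

/-- The canonical orthonormal basis of ℓ². -/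
noncomputable def E (n : ℕ) : lp (fun _ : ℕ => ℝ) 2 := lp.single 2 n (1 : ℝ)

/-- `f t n i` is the largest `x ≤ i` such that `∀ x' < x, ∃ y < i, t x' y n = 0`. -/
noncomputable def f (t : ℕ → ℕ → ℕ → ℕ) (n i : ℕ) : ℕ :=
  Nat.findGreatest (fun x => ∀ x' < x, ∃ y < i, t x' y n = 0) i

/-- The sequence `y_{n,i} := e_{⟨n, f(n,i)⟩}` in ℓ². -/
noncomputable def Y (t : ℕ → ℕ → ℕ → ℕ) (n i : ℕ) : lp (fun _ : ℕ => ℝ) 2 :=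
  E (Nat.pair n (f t n i))

/-- `M n` is the closed span of `{e_{⟨n,k⟩} : k ∈ ℕ}` in ℓ². -/
noncomputable def M (n : ℕ) : Submodule ℝ (lp (fun _ : ℕ => ℝ) 2) :=
  (Submodule.span ℝ (Set.range fun k => E (Nat.pair n k))).topologicalClosure

instance (n : ℕ) : CompleteSpace (M n) :=
  (Submodule.isClosed_topologicalClosure _).completeSpace_coe

/-!
The coordinate of `x_i` along `e_{⟨n,k⟩}` is `2^{-(n+1)/2}` if `k = f(n,i)` and `0` otherwise.
If `∀ a ∃ b, t(a,b,n) = 0`, then `f(n,i) → ∞`, so every such coordinate of a weak limit vanishes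
and the limit is orthogonal to `M n`. Otherwise `f(n,i)` is eventually the least `a₀` with
`∀ b, t(a₀,b,n) ≠ 0`, so the projection of the limit onto `M n` is `2^{-(n+1)/2} e_{⟨n,a₀⟩}`.
-/

section ClosedSpan

variable {ι H : Type*} [NormedAddCommGroup H] [InnerProductSpace ℝ H] {v : ι → H} {x : H}

theorem mem_orthogonal_closure_span_range (h : ∀ k, ⟪v k, x⟫ = 0) :
    x ∈ (Submodule.span ℝ (Set.range v)).topologicalClosureᗮ := by
  rw [Submodule.orthogonal_closure, Submodule.mem_orthogonal]
  intro u hu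
  induction hu using Submodule.span_induction with
  | mem u hu => obtain ⟨k, rfl⟩ := hu; exact h k
  | zero => exact inner_zero_left x
  | add u w _ _ hu hw => rw [inner_add_left, hu, hw, add_zero]
  | smul a u _ hu => rw [real_inner_smul_left, hu, mul_zero]

theorem starProjection_closure_span_range_eq_smul [DecidableEq ι] (hv : Orthonormal ℝ v)
    [(Submodule.span ℝ (Set.range v)).topologicalClosure.HasOrthogonalProjection]
    {k₀ : ι} {c : ℝ} (hx : ∀ k, ⟪v k, x⟫ = if k = k₀ then c else 0) :
    (Submodule.span ℝ (Set.range v)).topologicalClosure.starProjection x = c • v k₀ := by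
  have hk₀ : v k₀ ∈ (Submodule.span ℝ (Set.range v)).topologicalClosure :=
    Submodule.le_topologicalClosure _ (Submodule.subset_span ⟨k₀, rfl⟩)
  refine Submodule.eq_starProjection_of_mem_of_inner_eq_zero (Submodule.smul_mem _ c hk₀)
    fun w hw => Submodule.inner_left_of_mem_orthogonal hw
      (mem_orthogonal_closure_span_range fun k => ?_)
  rw [inner_sub_right, real_inner_smul_right, hx, orthonormal_iff_ite.1 hv]
  split_ifs <;> simp

end ClosedSpan

theorem orthonormal_E : Orthonormal ℝ E := by
  rw [orthonormal_iff_ite]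
  intro i j
  simp [E, lp.inner_single_left, lp.single_apply, Pi.single_apply]

theorem orthonormal_E_pair (n : ℕ) : Orthonormal ℝ fun k => E (Nat.pair n k) :=
  orthonormal_E.comp _ fun _ _ h => (Nat.pair_eq_pair.1 h).2

section Approximation

variable {t : ℕ → ℕ → ℕ → ℕ} {n a : ℕ}

theorem f_le_of_forall_ne (ha : ∀ b, t a b n ≠ 0) (i : ℕ) : f t n i ≤ a := by
  by_contra! h
  have hP : ∀ x' < f t n i, ∃ y < i, t x' y n = 0 :=
    Nat.findGreatest_spec (P := fun x => ∀ x' < x, ∃ y < i, t x' y n = 0) (Nat.zero_le i)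
      fun _ h => absurd h (Nat.not_lt_zero _)
  obtain ⟨b, -, hb⟩ := hP a h
  exact ha b hb

theorem eventually_le_f (ha : ∀ a' < a, ∃ b, t a' b n = 0) : ∀ᶠ i in atTop, a ≤ f t n i := by
  have hwit : ∀ᶠ i in atTop, ∀ a' ∈ Set.Iio a, ∃ b < i, t a' b n = 0 := by
    refine (Filter.eventually_all_finite (Set.finite_Iio a)).2 fun a' ha' => ?_
    obtain ⟨b, hb⟩ := ha a' ha'
    exact (eventually_gt_atTop b).mono fun i hi => ⟨b, hi, hb⟩
  filter_upwards [hwit, eventually_ge_atTop a] with i hi hai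
  exact Nat.le_findGreatest hai hi

theorem tendsto_f_atTop (h : ∀ a, ∃ b, t a b n = 0) : Tendsto (f t n) atTop atTop :=
  tendsto_atTop.2 fun _ => eventually_le_f fun a' _ => h a'

theorem eventually_f_eq_find (h : ∃ a, ∀ b, t a b n ≠ 0) :
    ∀ᶠ i in atTop, f t n i = Nat.find h := by
  have hmin : ∀ a' < Nat.find h, ∃ b, t a' b n = 0 := fun a' ha' => by
    simpa using Nat.find_min h ha'
  filter_upwards [eventually_le_f hmin] with i hi
  exact le_antisymm (f_le_of_forall_ne (Nat.find_spec h) i) hi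

end Approximation

noncomputable def weight (n : ℕ) : ℝ := 2 ^ (-((n : ℝ) + 1) / 2)

noncomputable def xSeq (t : ℕ → ℕ → ℕ → ℕ) (i : ℕ) : lp (fun _ : ℕ => ℝ) 2 :=
  ∑ n ∈ Finset.range (i + 1), weight n • Y t n i

theorem weight_pos (n : ℕ) : 0 < weight n := Real.rpow_pos_of_pos two_pos _

theorem weight_sq (n : ℕ) : weight n ^ 2 = (1 / 2) ^ (n + 1) := by
  rw [weight, ← Real.rpow_natCast, ← Real.rpow_mul zero_le_two, one_div, inv_pow,
    ← Real.rpow_natCast, ← Real.rpow_neg zero_le_two]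
  congr 1
  push_cast
  ring

theorem norm_xSeq_le (t : ℕ → ℕ → ℕ → ℕ) (i : ℕ) : ‖xSeq t i‖ ≤ 1 := by
  have horth : Orthonormal ℝ fun n => Y t n i :=
    orthonormal_E.comp _ fun _ _ h => (Nat.pair_eq_pair.1 h).1
  have hsq : ‖xSeq t i‖ ^ 2 = ∑ n ∈ Finset.range (i + 1), (1 / 2 : ℝ) ^ (n + 1) := by
    rw [xSeq, ← real_inner_self_eq_norm_sq, horth.inner_sum]
    exact Finset.sum_congr rfl fun n _ => by rw [conj_trivial, ← sq, weight_sq]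
  have hgeom : ∑ n ∈ Finset.range (i + 1), (1 / 2 : ℝ) ^ (n + 1) ≤ 1 := by
    simp only [pow_succ, ← Finset.sum_mul]
    linarith [sum_geometric_two_le (i + 1)]
  exact (sq_le_one_iff₀ (norm_nonneg _)).1 (hsq ▸ hgeom)

theorem inner_E_pair_xSeq (t : ℕ → ℕ → ℕ → ℕ) (i n k : ℕ) :
    ⟪E (Nat.pair n k), xSeq t i⟫ = if n ≤ i ∧ f t n i = k then weight n else 0 := by
  have hterm : ∀ m, ⟪E (Nat.pair n k), weight m • Y t m i⟫
      = if m = n then (if f t n i = k then weight n else 0) else 0 := fun m => by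
    rw [real_inner_smul_right, Y, orthonormal_iff_ite.1 orthonormal_E]
    by_cases hm : m = n
    · subst hm
      by_cases hk : f t m i = k <;> simp [hk, eq_comm (a := k)]
    · simp [hm, Nat.pair_eq_pair, Ne.symm hm]
  rw [xSeq, inner_sum, Finset.sum_congr rfl fun m _ => hterm m, Finset.sum_ite_eq']
  by_cases hn : n ≤ i <;> simp [hn]

theorem inner_E_pair_eq_of_eventually {t : ℕ → ℕ → ℕ → ℕ} {X : lp (fun _ : ℕ => ℝ) 2}
    {φ : ℕ → ℕ} (hφ : StrictMono φ)
    (hlim : ∀ y, Tendsto (fun m => ⟪y, xSeq t (φ m)⟫) atTop (𝓝 ⟪y, X⟫)) {n k : ℕ} {c : ℝ}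
    (h : ∀ᶠ i in atTop, (if f t n i = k then weight n else 0) = c) :
    ⟪E (Nat.pair n k), X⟫ = c := by
  refine tendsto_nhds_unique_of_eventuallyEq (hlim _) tendsto_const_nhds ?_
  filter_upwards [hφ.tendsto_atTop.eventually (h.and (eventually_ge_atTop n))] with m ⟨hc, hn⟩
  rw [inner_E_pair_xSeq, ← hc]
  simp only [hn, true_and]

/-- For every `t` there is a bounded sequence `(x_i)` in ℓ², given by the explicit
primitive recursive formula `x_i = ∑_{n ≤ i} 2^{-(n+1)/2} y_{n,i}`, such that for any
weak cluster point `x` of `(x_i)` one has, for every `n`: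
`∀ a ∃ b, t a b n = 0` iff `‖P_{M n} x‖ = 0`, and otherwise `‖P_{M n} x‖ = 2^{-(n+1)/2}`. -/
theorem stmt6 (t : ℕ → ℕ → ℕ → ℕ) :
    ∃ x : ℕ → lp (fun _ : ℕ => ℝ) 2,
      (x = fun i => ∑ n ∈ Finset.range (i + 1), (2 : ℝ) ^ (-((n : ℝ) + 1) / 2) • Y t n i) ∧
      (∀ i, ‖x i‖ ≤ 1) ∧
      ∀ (X : lp (fun _ : ℕ => ℝ) 2) (φ : ℕ → ℕ), StrictMono φ →
        (∀ y : lp (fun _ : ℕ => ℝ) 2,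
          Tendsto (fun m => ⟪y, x (φ m)⟫) atTop (𝓝 ⟪y, X⟫)) →
        ∀ n : ℕ,
          ((∀ a, ∃ b, t a b n = 0) ↔ ‖(Submodule.orthogonalProjectionOnto (M n) X : lp (fun _ : ℕ => ℝ) 2)‖ = 0) ∧
          (¬ (∀ a, ∃ b, t a b n = 0) →
            ‖(Submodule.orthogonalProjectionOnto (M n) X : lp (fun _ : ℕ => ℝ) 2)‖
              = (2 : ℝ) ^ (-((n : ℝ) + 1) / 2)) := by
  refine ⟨xSeq t, rfl, norm_xSeq_le t, fun X φ hφ hlim n => ?_⟩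
  have hcoord := fun k c => inner_E_pair_eq_of_eventually hφ hlim (n := n) (k := k) (c := c)
  by_cases hA : ∀ a, ∃ b, t a b n = 0
  · have hperp : X ∈ (M n)ᗮ := mem_orthogonal_closure_span_range fun k =>
      hcoord k 0 (((tendsto_f_atTop hA).eventually_gt_atTop k).mono fun _ hi => if_neg hi.ne')
    simp [hA, Submodule.orthogonalProjectionOnto_eq_zero_iff.2 hperp]
  · push Not at hA
    have hproj : (Submodule.orthogonalProjectionOnto (M n) X : lp (fun _ : ℕ => ℝ) 2)
        = weight n • E (Nat.pair n (Nat.find hA)) := by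
      rw [← Submodule.starProjection_apply]
      exact starProjection_closure_span_range_eq_smul (orthonormal_E_pair n) fun k =>
        hcoord k _ ((eventually_f_eq_find hA).mono fun _ hi => by
          simp only [hi, eq_comm (a := Nat.find hA)])
    have hnorm : ‖(Submodule.orthogonalProjectionOnto (M n) X : lp (fun _ : ℕ => ℝ) 2)‖
        = weight n := by
      rw [hproj, norm_smul, orthonormal_E.norm_eq_one, mul_one,
        Real.norm_of_nonneg (weight_pos n).le]
    exact ⟨iff_of_false (by simpa using hA) (hnorm ▸ (weight_pos n).ne'), fun _ => hnorm⟩
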